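/- arXiv:0803.0055 — 2 statements merged into one kernel-verified Lean document; each statement's English description precedes it below -/
import Mathlib

section
/- The global rule F : C → C of any sand automaton is uniformly continuous with respect to the distance d. -/
open Filter

/-- The set `Z̃ = ℤ ∪ {−∞, +∞}` of extended integers. -/
abbrev Ztilde := WithBot (WithTop ℤ)

/-- Embedding of `ℤ` into `Z̃`. -/
def Ztilde.ofInt (z : ℤ) : Ztilde := ((z : WithTop ℤ) : WithBot (WithTop ℤ))

/-- The underlying integer of a finite extended integer (0 on `±∞`). -/
def Ztilde.toInt (n : Ztilde) : ℤ := WithTop.untopD 0 (WithBot.unbotD 0 n)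

/-- The sand-automata configuration space `C = Z̃^(ℤ^d)`. -/
abbrev Conf (d : ℕ) := (Fin d → ℤ) → Ztilde

/-- `ζ : C → {0,1}^(ℤ^(d+1))`, `ζ(x)_(i,k) = 1` iff `x_i ≥ k`. -/
noncomputable def zeta {d : ℕ} (x : Conf d) : (Fin d → ℤ) × ℤ → Bool :=
  fun j => decide (Ztilde.ofInt j.2 ≤ x j.1)

/-- The subshift `S_K`: configurations with no `0` below a `1` in a column. -/
def SK (d : ℕ) : Set ((Fin d → ℤ) × ℤ → Bool) :=
  {y | ∀ (i : Fin d → ℤ) (k : ℤ), y (i, k + 1) = true → y (i, k) = true}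

/-- The sup-norm `|j|_∞` of an index in `ℤ^(d+1) = ℤ^d × ℤ`. -/
def idxNorm {d : ℕ} (j : (Fin d → ℤ) × ℤ) : ℕ :=
  max (Finset.univ.sup fun t => (j.1 t).natAbs) j.2.natAbs

open scoped Classical in
/-- The distance `d(x,y) = 2^(−min{|j|_∞ : ζ(x)_j ≠ ζ(y)_j})`, `0` if `x = y`. -/
noncomputable def saDist {d : ℕ} (x y : Conf d) : ℝ :=
  if x = y then 0
  else (2 : ℝ) ^ (-((sInf {n : ℕ | ∃ j, idxNorm j = n ∧ zeta x j ≠ zeta y j} : ℕ) : ℤ))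

/-- The measuring device `β_r^m`. -/
noncomputable def beta (r : ℕ) (m : ℤ) (n : Ztilde) : Ztilde :=
  if Ztilde.ofInt (m + r) < n then ⊤
  else if n < Ztilde.ofInt (m - r) then ⊥
  else Ztilde.ofInt (n.toInt - m)

/-- The neighborhood `[−r,r]^d \ {0}` of a sand automaton of radius `r`. -/
def Nbhd (d r : ℕ) := {k : Fin d → ℤ // (∀ t, (k t).natAbs ≤ r) ∧ k ≠ 0}

/-- The range `R_r^i(x)` of center `i` and radius `r`. -/
noncomputable def saRange {d : ℕ} (r : ℕ) (x : Conf d) (i : Fin d → ℤ) : Nbhd d r → Ztilde :=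
  fun k => beta r (x i).toInt (x (i + k.1))

/-- A sand automaton of dimension `d`: a radius `r` and a local rule `f`
taking values in `{−r,…,r}`. -/
structure SandAutomaton (d : ℕ) where
  r : ℕ
  f : (Nbhd d r → Ztilde) → ℤ
  f_mem : ∀ R, (f R).natAbs ≤ r

/-- The global rule `F : C → C` of a sand automaton. -/
noncomputable def SandAutomaton.global {d : ℕ} (S : SandAutomaton d) (x : Conf d) : Conf d :=
  fun i => if x i = ⊤ ∨ x i = ⊥ then x i
    else Ztilde.ofInt ((x i).toInt + S.f (saRange S.r x i))

/-- The shift map `σ^k`. -/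
def shift {d : ℕ} (k : Fin d → ℤ) (x : Conf d) : Conf d := fun i => x (i + k)

/-- The raising map `ρ`. -/
def raise {d : ℕ} (x : Conf d) : Conf d :=
  fun i => if x i = ⊤ ∨ x i = ⊥ then x i else Ztilde.ofInt ((x i).toInt + 1)

/-- A map `F : C → C` is infinity-preserving. -/
def InfinityPreserving {d : ℕ} (F : Conf d → Conf d) : Prop :=
  ∀ (x : Conf d) (i : Fin d → ℤ),
    (F x i = ⊤ ↔ x i = ⊤) ∧ (F x i = ⊥ ↔ x i = ⊥)

/-!
Whether `F(x)_i ≥ κ` for `|i|, |κ| ≤ k` is decided by `ζ(x)` on the ball of radius `k + 2r + 1`.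
If `x_i > k + r` or `x_i < -k - r`, the bound `|f| ≤ r` settles it. Otherwise `x_i` is a finite
height `v` with `|v| ≤ k + r`, and the range `R_r^i(x)` only reads the columns within `r` of `i`
at the levels within `r + 1` of `v`. So `d(x, y) < 2^(-(k + 2r + 1))` gives `d(F x, F y) < 2^(-k)`.
-/

namespace Ztilde

theorem ofInt_le_ofInt {a b : ℤ} : ofInt a ≤ ofInt b ↔ a ≤ b := by
  simp [ofInt]

theorem toInt_ofInt (v : ℤ) : (ofInt v).toInt = v := rfl

theorem recBotTopOfInt {motive : Ztilde → Prop} (bot : motive ⊥) (top : motive ⊤)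
    (ofInt : ∀ v, motive (ofInt v)) (a : Ztilde) : motive a := by
  induction a using WithBot.recBotCoe with
  | bot => exact bot
  | coe a => induction a using WithTop.recTopCoe with
    | top => exact top
    | coe v => exact ofInt v

theorem ofInt_lt_iff_add_one_le {c : ℤ} {a : Ztilde} : ofInt c < a ↔ ofInt (c + 1) ≤ a := by
  induction a using Ztilde.recBotTopOfInt with
  | bot => simp [Ztilde.ofInt]
  | top => simp [Ztilde.ofInt, lt_top_iff_ne_top]
  | ofInt v => rw [ofInt_le_ofInt, lt_iff_not_ge, ofInt_le_ofInt]; omega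

theorem le_of_forall_ofInt_le {a b : Ztilde} (h : ∀ κ, ofInt κ ≤ a → ofInt κ ≤ b) : a ≤ b := by
  induction a using Ztilde.recBotTopOfInt with
  | bot => exact bot_le
  | ofInt v => exact h v le_rfl
  | top =>
    induction b using Ztilde.recBotTopOfInt with
    | bot => exact absurd (h 0 le_top) (by simp [Ztilde.ofInt])
    | top => exact le_rfl
    | ofInt w => exact absurd (h (w + 1) le_top) (by rw [ofInt_le_ofInt]; omega)

theorem eq_of_forall_ofInt_le_iff {a b : Ztilde} (h : ∀ κ, ofInt κ ≤ a ↔ ofInt κ ≤ b) :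
    a = b :=
  le_antisymm (le_of_forall_ofInt_le fun κ => (h κ).1) (le_of_forall_ofInt_le fun κ => (h κ).2)

/-- Outside `[lo, hi]` the thresholds of `a` and `b` agree by monotonicity. -/
theorem eq_of_ofInt_le_iff_of_mem_Icc {lo hi : ℤ} {a b : Ztilde}
    (h : ∀ κ, lo ≤ κ → κ ≤ hi → (ofInt κ ≤ a ↔ ofInt κ ≤ b))
    (hlo : ofInt lo ≤ a) (hhi : ¬ ofInt hi ≤ a) : a = b := by
  have hlohi : lo ≤ hi := le_of_not_gt fun hc => hhi (le_trans (ofInt_le_ofInt.2 hc.le) hlo)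
  have hlo_b := (h lo le_rfl hlohi).1 hlo
  have hhi_b := mt (h hi hlohi le_rfl).2 hhi
  refine eq_of_forall_ofInt_le_iff fun κ => ?_
  rcases lt_or_ge κ lo with hκ | hκ
  · exact iff_of_true (le_trans (ofInt_le_ofInt.2 hκ.le) hlo)
      (le_trans (ofInt_le_ofInt.2 hκ.le) hlo_b)
  rcases le_or_gt κ hi with hκ' | hκ'
  · exact h κ hκ hκ'
  · exact iff_of_false (fun hc => hhi (le_trans (ofInt_le_ofInt.2 hκ'.le) hc))
      (fun hc => hhi_b (le_trans (ofInt_le_ofInt.2 hκ'.le) hc))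

theorem exists_eq_ofInt_of_bounds {lo hi : ℤ} {a : Ztilde}
    (hlo : ofInt lo ≤ a) (hhi : ¬ ofInt hi ≤ a) : ∃ v, a = ofInt v ∧ lo ≤ v ∧ v < hi := by
  induction a using Ztilde.recBotTopOfInt with
  | bot => exact absurd hlo (by simp [Ztilde.ofInt])
  | top => exact absurd le_top hhi
  | ofInt v =>
    rw [ofInt_le_ofInt] at hlo hhi
    exact ⟨v, rfl, hlo, by omega⟩

end Ztilde

open Ztilde

theorem beta_congr {r : ℕ} {m : ℤ} {a b : Ztilde}
    (h : ∀ κ, m - r ≤ κ → κ ≤ m + r + 1 → (ofInt κ ≤ a ↔ ofInt κ ≤ b)) :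
    beta r m a = beta r m b := by
  have hhi : ofInt (m + r) < a ↔ ofInt (m + r) < b := by
    simp only [ofInt_lt_iff_add_one_le]
    exact h _ (by omega) le_rfl
  have hlo : a < ofInt (m - r) ↔ b < ofInt (m - r) := by
    simp only [← not_le]
    exact not_congr (h _ le_rfl (by omega))
  unfold beta
  by_cases ha : ofInt (m + r) < a
  · rw [if_pos ha, if_pos (hhi.1 ha)]
  by_cases ha' : a < ofInt (m - r)
  · rw [if_neg ha, if_neg (mt hhi.2 ha), if_pos ha', if_pos (hlo.1 ha')]
  rw [eq_of_ofInt_le_iff_of_mem_Icc h (not_lt.1 ha') (by rwa [← ofInt_lt_iff_add_one_le])]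

section Distance

variable {d : ℕ}

theorem idxNorm_le_iff {j : (Fin d → ℤ) × ℤ} {m : ℕ} :
    idxNorm j ≤ m ↔ (∀ t, (j.1 t).natAbs ≤ m) ∧ j.2.natAbs ≤ m := by
  simp [idxNorm, Finset.sup_le_iff]

theorem zeta_injective : Function.Injective (zeta (d := d)) := fun x y h =>
  funext fun i => eq_of_forall_ofInt_le_iff fun κ => by
    simpa [zeta] using congrFun h (i, κ)

def ZetaEqOnBall (m : ℕ) (x y : Conf d) : Prop :=
  ∀ j, idxNorm j ≤ m → zeta x j = zeta y j

theorem zetaEqOnBall_iff {m : ℕ} {x y : Conf d} :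
    ZetaEqOnBall m x y ↔ ∀ i κ, (∀ t, (i t).natAbs ≤ m) → κ.natAbs ≤ m →
      (ofInt κ ≤ x i ↔ ofInt κ ≤ y i) := by
  simp [ZetaEqOnBall, idxNorm_le_iff, zeta, Prod.forall]

theorem zetaEqOnBall_of_saDist_lt {m : ℕ} {x y : Conf d} (h : saDist x y < 2 ^ (-(m : ℤ))) :
    ZetaEqOnBall m x y := by
  intro j hj
  by_contra hne
  have hxy : x ≠ y := fun e => hne (e ▸ rfl)
  rw [saDist, if_neg hxy, zpow_lt_zpow_iff_right₀ one_lt_two, neg_lt_neg_iff, Nat.cast_lt] at h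
  have hmem : idxNorm j ∈ {n : ℕ | ∃ j, idxNorm j = n ∧ zeta x j ≠ zeta y j} := ⟨j, rfl, hne⟩
  exact (Nat.sInf_le hmem).not_gt (hj.trans_lt h)

theorem saDist_lt_of_zetaEqOnBall {k : ℕ} {x y : Conf d} (h : ZetaEqOnBall k x y) :
    saDist x y < 2 ^ (-(k : ℤ)) := by
  unfold saDist
  split_ifs with hxy
  · positivity
  obtain ⟨j, hj⟩ := Function.ne_iff.1 (zeta_injective.ne hxy)
  obtain ⟨j', hj', hne'⟩ := Nat.sInf_mem
    (s := {n : ℕ | ∃ j, idxNorm j = n ∧ zeta x j ≠ zeta y j}) ⟨_, j, rfl, hj⟩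
  have : k < idxNorm j' := lt_of_not_ge fun hle => hne' (h j' hle)
  exact zpow_lt_zpow_right₀ one_lt_two (by omega)

end Distance

namespace SandAutomaton

variable {d : ℕ} (S : SandAutomaton d) {x y : Conf d} {i : Fin d → ℤ}

theorem global_apply_ofInt {v : ℤ} (hv : x i = ofInt v) :
    S.global x i = ofInt (v + S.f (saRange S.r x i)) := by
  simp only [global, hv]
  rw [if_neg (by simp [ofInt]), toInt_ofInt]

theorem global_apply_congr (hxy : x i = y i) (hR : saRange S.r x i = saRange S.r y i) :
    S.global x i = S.global y i := by
  simp only [global, hxy, hR]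

theorem ofInt_sub_le_global_apply {c : ℤ} (h : ofInt c ≤ x i) :
    ofInt (c - S.r) ≤ S.global x i := by
  have hf := S.f_mem (saRange S.r x i)
  cases hx : x i using Ztilde.recBotTopOfInt with
  | bot => exact absurd (hx ▸ h) (by simp [Ztilde.ofInt])
  | top => simp [global, hx]
  | ofInt v =>
    rw [global_apply_ofInt S hx, ofInt_le_ofInt]
    have := ofInt_le_ofInt.1 (hx ▸ h)
    omega

theorem not_ofInt_add_le_global_apply {c : ℤ} (h : ¬ ofInt c ≤ x i) :
    ¬ ofInt (c + S.r) ≤ S.global x i := by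
  have hf := S.f_mem (saRange S.r x i)
  cases hx : x i using Ztilde.recBotTopOfInt with
  | bot => simp [global, hx, Ztilde.ofInt]
  | top => exact absurd (hx ▸ le_top) h
  | ofInt v =>
    rw [global_apply_ofInt S hx, ofInt_le_ofInt]
    have := mt ofInt_le_ofInt.2 (hx ▸ h)
    omega

theorem zetaEqOnBall_global {k : ℕ} (h : ZetaEqOnBall (k + 2 * S.r + 1) x y) :
    ZetaEqOnBall k (S.global x) (S.global y) := by
  rw [zetaEqOnBall_iff] at h ⊢
  intro i κ hi hκ
  set r := S.r
  have hcol : ∀ κ : ℤ, κ.natAbs ≤ k + 2 * r + 1 → (ofInt κ ≤ x i ↔ ofInt κ ≤ y i) :=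
    fun κ => h i κ fun t => (hi t).trans (by omega)
  by_cases hhigh : ofInt (k + r + 1) ≤ x i
  · have hhigh' := (hcol _ (by omega)).1 hhigh
    refine iff_of_true ?_ ?_
    · exact le_trans (ofInt_le_ofInt.2 (by omega)) (S.ofInt_sub_le_global_apply hhigh)
    · exact le_trans (ofInt_le_ofInt.2 (by omega)) (S.ofInt_sub_le_global_apply hhigh')
  by_cases hlow : ofInt (-k - r) ≤ x i
  swap
  · have hlow' := mt (hcol _ (by omega)).2 hlow
    refine iff_of_false ?_ ?_
    · exact fun hc => S.not_ofInt_add_le_global_apply hlow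
        (le_trans (ofInt_le_ofInt.2 (by omega)) hc)
    · exact fun hc => S.not_ofInt_add_le_global_apply hlow'
        (le_trans (ofInt_le_ofInt.2 (by omega)) hc)
  obtain ⟨v, hv, hv_lo, hv_hi⟩ := exists_eq_ofInt_of_bounds hlow hhigh
  have hxy : x i = y i :=
    eq_of_ofInt_le_iff_of_mem_Icc (fun κ h₁ h₂ => hcol κ (by omega)) hlow hhigh
  have hrange : saRange r x i = saRange r y i := funext fun nb => by
    simp only [saRange, ← hxy, hv, toInt_ofInt]
    refine beta_congr fun κ h₁ h₂ => h (i + nb.1) κ (fun t => ?_) (by omega)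
    have := hi t
    have := nb.2.1 t
    simp only [Pi.add_apply]
    omega
  rw [S.global_apply_congr hxy hrange]

end SandAutomaton

theorem sa_global_uniformly_continuous_general (d : ℕ) (S : SandAutomaton d) :
    ∀ ε : ℝ, 0 < ε → ∃ δ : ℝ, 0 < δ ∧
      ∀ x y : Conf d, saDist x y < δ → saDist (S.global x) (S.global y) < ε := by
  intro ε hε
  obtain ⟨k, hk⟩ := exists_pow_lt_of_lt_one hε (by norm_num : (2 : ℝ)⁻¹ < 1)
  refine ⟨2 ^ (-((k + 2 * S.r + 1 : ℕ) : ℤ)), by positivity, fun x y hxy => ?_⟩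
  calc saDist (S.global x) (S.global y) < 2 ^ (-(k : ℤ)) :=
        saDist_lt_of_zetaEqOnBall (S.zetaEqOnBall_global (zetaEqOnBall_of_saDist_lt hxy))
    _ = 2⁻¹ ^ k := by rw [zpow_neg, zpow_natCast, inv_pow]
    _ < ε := hk

/-- The global rule of any sand automaton is uniformly
continuous with respect to the distance `d`. -/
theorem sa_global_uniformly_continuous (d : ℕ) (hd : 1 ≤ d) (S : SandAutomaton d) :
    ∀ ε : ℝ, 0 < ε → ∃ δ : ℝ, 0 < δ ∧
      ∀ x y : Conf d, saDist x y < δ → saDist (S.global x) (S.global y) < ε :=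
  sa_global_uniformly_continuous_general d S
end

section
/- A cellular automaton G is nilpotent if and only if it is nilpotent on every initial configuration: there exist c ∈ A and N ∈ ℕ such that G^n(x) = c̄ for all configurations x and all n ≥ N, if and only if for every configuration x ∈ A^(ℤ^D) there exist c ∈ A and N ∈ ℕ such that G^n(x) = c̄ for all n ≥ N. -/
/-!
If every orbit of `G` ends in a constant configuration, all of them end in the same one `c`: a
configuration equal to `c` on a half-space and to `c'` on the complementary one ends in a
constant, while locality keeps `c` deep inside the first half-space and `c'` deep inside the
second. So the sets `{x | Gⁿ x = c̄}` cover the compact space of configurations, and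
they are closed, so by Baire one of them contains a cylinder `{y | y = x₀ on I}` with `I` finite.
By locality `Gⁿ y` is then `c` at every cell whose `rn`-neighbourhood misses `I`, and by shift
invariance this holds at every cell.
-/

/-- The neighborhood `[−r,r]^D` of a cellular automaton of radius `r`. -/
def CANbhd (D r : ℕ) := {j : Fin D → ℤ // ∀ t, (j t).natAbs ≤ r}

/-- The global rule of the `D`-dimensional cellular automaton over the alphabet
`A` with local rule `g` of radius `r`. -/
def caGlobal {D r : ℕ} {A : Type*} (g : (CANbhd D r → A) → A)
    (x : (Fin D → ℤ) → A) : (Fin D → ℤ) → A :=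
  fun i => g fun j => x (i + j.1)

instance CANbhd.instFinite (D r : ℕ) : Finite (CANbhd D r) := by
  have : Finite (Set.Icc (-(r : ℤ)) r) := (Set.finite_Icc _ _).to_subtype
  refine Finite.of_injective
    (fun j : CANbhd D r => fun t => (⟨j.1 t, by have := j.2 t; constructor <;> omega⟩ :
      Set.Icc (-(r : ℤ)) r)) fun a b hab => Subtype.ext <| funext fun t => ?_
  exact congrArg Subtype.val (congrFun hab t)

open Function

theorem Function.isFixedPt_of_iterate_eventually_eq {α : Type*} {f : α → α} {x a : α} {N : ℕ}
    (h : ∀ n, N ≤ n → f^[n] x = a) : IsFixedPt f a := by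
  have := h (N + 1) (Nat.le_succ N)
  rwa [iterate_succ_apply', h N le_rfl] at this

section CellularAutomaton

variable {D r : ℕ} {A : Type*} (g : (CANbhd D r → A) → A)

theorem caGlobal_iterate_apply_congr (n : ℕ) {x y : (Fin D → ℤ) → A} {i : Fin D → ℤ}
    (h : ∀ j : Fin D → ℤ, (∀ t, (j t - i t).natAbs ≤ r * n) → x j = y j) :
    (caGlobal g)^[n] x i = (caGlobal g)^[n] y i := by
  induction n generalizing x y with
  | zero => exact h i (by simp)
  | succ n ih =>
    rw [iterate_succ_apply, iterate_succ_apply]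
    refine ih fun j hj => congrArg g (funext fun k => h _ fun t => ?_)
    calc (j t + k.1 t - i t).natAbs = ((j t - i t) + k.1 t).natAbs := by ring_nf
      _ ≤ (j t - i t).natAbs + (k.1 t).natAbs := Int.natAbs_add_le _ _
      _ ≤ r * n + r := add_le_add (hj t) (k.2 t)
      _ = r * (n + 1) := by ring

theorem caGlobal_iterate_comp_add_right (v : Fin D → ℤ) (n : ℕ) (x : (Fin D → ℤ) → A)
    (i : Fin D → ℤ) :
    (caGlobal g)^[n] (fun j => x (j + v)) i = (caGlobal g)^[n] x (i + v) := by
  induction n generalizing x with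
  | zero => rfl
  | succ n ih =>
    have hshift : caGlobal g (fun j => x (j + v)) = fun j => caGlobal g x (j + v) :=
      funext fun j => congrArg g (funext fun k => congrArg x (add_right_comm j v k.1).symm)
    rw [iterate_succ_apply, iterate_succ_apply, hshift, ih]

theorem caGlobal_iterate_apply_eq_of_isFixedPt {c : A} (hc : IsFixedPt (caGlobal g) fun _ => c)
    (n : ℕ) {x : (Fin D → ℤ) → A} {i : Fin D → ℤ}
    (hx : ∀ j : Fin D → ℤ, (∀ t, (j t - i t).natAbs ≤ r * n) → x j = c) :
    (caGlobal g)^[n] x i = c := by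
  rw [caGlobal_iterate_apply_congr g n hx]
  exact congrFun (hc.iterate n) i

theorem eq_of_isFixedPt_caGlobal_const (hD : 1 ≤ D)
    (h : ∀ x : (Fin D → ℤ) → A, ∃ (d : A) (N : ℕ), (caGlobal g)^[N] x = fun _ => d)
    {c c' : A} (hc : IsFixedPt (caGlobal g) fun _ => c)
    (hc' : IsFixedPt (caGlobal g) fun _ => c') : c = c' := by
  let t₀ : Fin D := ⟨0, hD⟩
  obtain ⟨d, N, hN⟩ := h fun j => if 0 ≤ j t₀ then c else c'
  have hpos := caGlobal_iterate_apply_eq_of_isFixedPt g hc N (x := fun j => if 0 ≤ j t₀ then c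
    else c') (i := fun _ => (r * N : ℕ)) fun j hj => if_pos (by have := hj t₀; omega)
  have hneg := caGlobal_iterate_apply_eq_of_isFixedPt g hc' N (x := fun j => if 0 ≤ j t₀ then c
    else c') (i := fun _ => -(r * N : ℕ) - 1) fun j hj => if_neg (by have := hj t₀; omega)
  rw [hN] at hpos hneg
  exact hpos.symm.trans hneg

theorem continuous_caGlobal [TopologicalSpace A] (hg : Continuous g) :
    Continuous (caGlobal g) :=
  continuous_pi fun _ => hg.comp (continuous_pi fun _ => continuous_apply _)

theorem exists_cylinder_of_forall_exists_iterate_eq_const [Finite A] {c : A}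
    (h : ∀ x : (Fin D → ℤ) → A, ∃ N, (caGlobal g)^[N] x = fun _ => c) :
    ∃ (N : ℕ) (x₀ : (Fin D → ℤ) → A) (I : Set (Fin D → ℤ)), I.Finite ∧
      ∀ y : (Fin D → ℤ) → A, (∀ j ∈ I, y j = x₀ j) → (caGlobal g)^[N] y = fun _ => c := by
  have : Nonempty A := ⟨c⟩
  let _ : TopologicalSpace A := ⊥
  have : DiscreteTopology A := ⟨rfl⟩
  have hG : Continuous (caGlobal g) := continuous_caGlobal g continuous_of_discreteTopology
  have hclosed (N : ℕ) : IsClosed ((caGlobal g)^[N] ⁻¹' {fun _ => c}) :=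
    isClosed_singleton.preimage (hG.iterate N)
  have hcover : ⋃ N, (caGlobal g)^[N] ⁻¹' {fun _ => c} = Set.univ :=
    Set.eq_univ_of_forall fun x => Set.mem_iUnion.mpr (h x)
  obtain ⟨N, x₀, hx₀⟩ := nonempty_interior_of_iUnion_of_closed hclosed hcover
  have hnhds := mem_interior_iff_mem_nhds.mp hx₀
  rw [nhds_pi, Filter.mem_pi] at hnhds
  obtain ⟨I, hI, U, hU, hsub⟩ := hnhds
  refine ⟨N, x₀, I, hI, fun y hy => hsub fun j hj => ?_⟩
  exact (hy j hj).symm ▸ mem_of_mem_nhds (hU j)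

theorem exists_iterate_eq_const_of_cylinder (hD : 1 ≤ D) {c : A} {N : ℕ}
    {x₀ : (Fin D → ℤ) → A} {I : Set (Fin D → ℤ)} (hI : I.Finite)
    (hcyl : ∀ y : (Fin D → ℤ) → A, (∀ j ∈ I, y j = x₀ j) → (caGlobal g)^[N] y = fun _ => c)
    (y : (Fin D → ℤ) → A) : (caGlobal g)^[N] y = fun _ => c := by
  classical
  let t₀ : Fin D := ⟨0, hD⟩
  obtain ⟨B, hB⟩ := (hI.image fun j => j t₀).bddAbove
  funext i
  let w : Fin D → ℤ := fun _ => B + (r * N : ℕ) + 1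
  have hfar : ∀ k : Fin D → ℤ, (∀ t, (k t - w t).natAbs ≤ r * N) → k ∉ I := fun k hk hkI => by
    have := hB (Set.mem_image_of_mem _ hkI)
    have : (k t₀ - (B + (r * N : ℕ) + 1)).natAbs ≤ r * N := hk t₀
    omega
  let y' : (Fin D → ℤ) → A := fun j => if j ∈ I then x₀ j else y (j + (i - w))
  calc (caGlobal g)^[N] y i = (caGlobal g)^[N] y (w + (i - w)) := by rw [add_sub_cancel]
    _ = (caGlobal g)^[N] (fun j => y (j + (i - w))) w :=
      (caGlobal_iterate_comp_add_right g _ N y w).symm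
    _ = (caGlobal g)^[N] y' w :=
      caGlobal_iterate_apply_congr g N fun k hk => (if_neg (hfar k hk)).symm
    _ = c := congrFun (hcyl y' fun j hj => if_pos hj) w

end CellularAutomaton

/-- A cellular automaton is nilpotent iff it is nilpotent on
every initial configuration: there exist `c ∈ A` and `N` such that `Gⁿ(x) = c̄`
for all `x` and all `n ≥ N`, iff for every configuration `x` there exist `c ∈ A`
and `N` such that `Gⁿ(x) = c̄` for all `n ≥ N`. -/
theorem ca_nilpotent_iff_pointwise {D : ℕ} (hD : 1 ≤ D) {A : Type} [Finite A]
    [Nonempty A] {r : ℕ} (g : (CANbhd D r → A) → A) :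
    (∃ (c : A) (N : ℕ), ∀ (x : (Fin D → ℤ) → A) (n : ℕ), N ≤ n →
        (caGlobal g)^[n] x = fun _ => c) ↔
      (∀ x : (Fin D → ℤ) → A, ∃ (c : A) (N : ℕ), ∀ n : ℕ, N ≤ n →
        (caGlobal g)^[n] x = fun _ => c) := by
  refine ⟨fun ⟨c, N, h⟩ x => ⟨c, N, h x⟩, fun h => ?_⟩
  obtain ⟨c, _, hc⟩ := h fun _ => Classical.arbitrary A
  have hfix : IsFixedPt (caGlobal g) fun _ => c := isFixedPt_of_iterate_eventually_eq hc
  have hreach (x : (Fin D → ℤ) → A) : ∃ N, (caGlobal g)^[N] x = fun _ => c := by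
    obtain ⟨d, N, hd⟩ := h x
    obtain rfl : d = c := eq_of_isFixedPt_caGlobal_const g hD
      (fun x => (h x).imp fun _ ⟨N, hN⟩ => ⟨N, hN N le_rfl⟩)
      (isFixedPt_of_iterate_eventually_eq hd) hfix
    exact ⟨N, hd N le_rfl⟩
  obtain ⟨N, x₀, I, hI, hcyl⟩ := exists_cylinder_of_forall_exists_iterate_eq_const g hreach
  refine ⟨c, N, fun x n hn => ?_⟩
  rw [← Nat.sub_add_cancel hn, iterate_add_apply,
    exists_iterate_eq_const_of_cylinder g hD hI hcyl x]
  exact hfix.iterate _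
end
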